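/- arXiv:2406.07322 — 5 statements merged into one kernel-verified Lean document; each statement's English description precedes it below -/
import Mathlib

section
/- For any elements x, y of a commutative ring (e.g. ℂ) and any integer n ≥ 1, the Waring formula holds: xⁿ + yⁿ = Σ_{k=0}^{⌊n/2⌋} (-1)^k · (n/(n-k)) · C(n-k, k) · (x+y)^{n-2k} · (xy)^k, where each coefficient (n/(n-k))·C(n-k,k) is an integer (equal to C(n-k,k) + C(n-k-1,k-1) for k ≥ 1, and equal to 1 for k = 0). -/
/-- The integer coefficient `(n/(n-k))·C(n-k,k)`, equal to `C(n-k,k) + C(n-k-1,k-1)`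
for `k ≥ 1` and to `1` for `k = 0`. -/
def dicksonCoeff (n k : ℕ) : ℕ :=
  if k = 0 then 1 else Nat.choose (n - k) k + Nat.choose (n - k - 1) (k - 1)

lemma dicksonCoeff_zero (h1 : n < 2*k) (h2 : 2 ≤ k) : dicksonCoeff n k = 0 := by
  rw [dicksonCoeff, if_neg (by omega)]
  rw [Nat.choose_eq_zero_of_lt (by omega), Nat.choose_eq_zero_of_lt (by omega)]

lemma dicksonCoeff_rec (m j : ℕ) (h : 2*j ≤ m+1) :
    dicksonCoeff (m+3) (j+1) = dicksonCoeff (m+2) (j+1) + dicksonCoeff (m+1) j := by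
  rcases j with _ | i
  · simp [dicksonCoeff, Nat.choose_one_right]
  · obtain ⟨d, rfl⟩ : ∃ d, m = 2*i+1+d := ⟨m - (2*i+1), by omega⟩
    simp only [dicksonCoeff, if_neg (Nat.succ_ne_zero _)]
    have e1 : 2*i+1+d+3 - (i+1+1) = (i+1+d)+1 := by omega
    have e2 : 2*i+1+d+3 - (i+1+1) - 1 = (i+d)+1 := by omega
    have e3 : 2*i+1+d+2 - (i+1+1) = i+1+d := by omega
    have e4 : 2*i+1+d+2 - (i+1+1) - 1 = i+d := by omega
    have e5 : 2*i+1+d+1 - (i+1) = i+1+d := by omega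
    have e6 : 2*i+1+d+1 - (i+1) - 1 = i+d := by omega
    have e7 : i+1+1-1 = i+1 := by omega
    have e8 : i+1-1 = i := by omega
    rw [e2, e1, e4, e3, e6, e5, e7, e8]
    rw [Nat.choose_succ_succ (i+1+d) (i+1), Nat.choose_succ_succ (i+d) i]
    ring

def waringSum {R : Type*} [CommRing R] (x y : R) (n : ℕ) : R :=
  ∑ k ∈ Finset.range (n / 2 + 1),
    (-1 : R) ^ k * (dicksonCoeff n k : R) * (x + y) ^ (n - 2 * k) * (x * y) ^ k

lemma waringSum_step {R : Type*} [CommRing R] (x y : R) (m : ℕ) :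
    waringSum x y (m+3) = (x+y) * waringSum x y (m+2) - x*y * waringSum x y (m+1) := by
  rw [waringSum, waringSum, waringSum, Finset.mul_sum, Finset.mul_sum]
  have hA : (∑ k ∈ Finset.range ((m+2)/2+1),
        (x+y) * ((-1:R)^k * (dicksonCoeff (m+2) k : R) * (x+y)^(m+2-2*k) * (x*y)^k))
      = ∑ k ∈ Finset.range ((m+3)/2+1),
        (-1:R)^k * (dicksonCoeff (m+2) k : R) * (x+y)^(m+3-2*k) * (x*y)^k := by
    rw [Finset.sum_congr rfl (fun k hk => ?_)]
    · exact Finset.sum_subset (Finset.range_subset_range.2 (by omega)) (fun k hk hk' => by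
        simp only [Finset.mem_range] at hk hk'
        rw [dicksonCoeff_zero (by omega) (by omega)]
        simp)
    · simp only [Finset.mem_range] at hk
      have h3 : m+3-2*k = (m+2-2*k)+1 := by omega
      rw [h3, pow_succ]; ring
  have hB : (∑ k ∈ Finset.range ((m+1)/2+1),
        x*y * ((-1:R)^k * (dicksonCoeff (m+1) k : R) * (x+y)^(m+1-2*k) * (x*y)^k))
      = ∑ k ∈ Finset.range ((m+3)/2+1),
        (if k = 0 then 0 else
          -((-1:R)^k * (dicksonCoeff (m+1) (k-1) : R) * (x+y)^(m+3-2*k) * (x*y)^k)) := by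
    have hn : (m+3)/2+1 = ((m+1)/2+1)+1 := by omega
    rw [hn, Finset.sum_range_succ'
      (fun k => if k = 0 then 0 else
        -((-1:R)^k * (dicksonCoeff (m+1) (k-1) : R) * (x+y)^(m+3-2*k) * (x*y)^k))
      ((m+1)/2+1)]
    simp only [Nat.succ_ne_zero, if_false, if_pos rfl, Nat.add_sub_cancel, add_zero,
      reduceIte]
    refine Finset.sum_congr rfl fun k hk => ?_
    simp only [Finset.mem_range] at hk
    have h3 : m+3-2*(k+1) = m+1-2*k := by omega
    rw [h3, pow_succ, pow_succ]; ring
  rw [hA, hB, ← Finset.sum_sub_distrib]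
  refine Finset.sum_congr rfl fun k hk => ?_
  simp only [Finset.mem_range] at hk
  rcases k with _ | j
  · simp [dicksonCoeff]
  · rw [if_neg (Nat.succ_ne_zero _), Nat.add_sub_cancel,
      dicksonCoeff_rec m j (by omega)]
    push_cast
    ring

lemma waring_aux {R : Type*} [CommRing R] (x y : R) : ∀ m : ℕ,
    x^(m+1)+y^(m+1) = waringSum x y (m+1) ∧ x^(m+2)+y^(m+2) = waringSum x y (m+2)
  | 0 => by
      constructor
      · simp [waringSum, dicksonCoeff]
      · rw [waringSum]
        norm_num [Finset.sum_range_succ, dicksonCoeff]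
        ring
  | m+1 => by
      obtain ⟨h1, h2⟩ := waring_aux x y m
      refine ⟨h2, ?_⟩
      have hr : x^(m+3)+y^(m+3) = (x+y)*(x^(m+2)+y^(m+2)) - x*y*(x^(m+1)+y^(m+1)) := by
        ring
      rw [show m+1+2 = m+3 from rfl, hr, h1, h2, waringSum_step]

/-- The Waring formula in a commutative ring. -/
theorem waring_formula {R : Type*} [CommRing R] (x y : R) (n : ℕ) (hn : 1 ≤ n) :
    x ^ n + y ^ n =
      ∑ k ∈ Finset.range (n / 2 + 1),
        (-1 : R) ^ k * (dicksonCoeff n k : R) * (x + y) ^ (n - 2 * k) * (x * y) ^ k := by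
  obtain ⟨m, rfl⟩ : ∃ m, n = m + 1 := ⟨n - 1, by omega⟩
  exact (waring_aux x y m).1
end

section
/- For all natural numbers m, n and all complex numbers x, a, the Dickson polynomials of the first kind satisfy the composition identity D_{mn}(x, a) = D_m(D_n(x, a), aⁿ). -/
/-- The `n`-th Dickson polynomial of the first kind, evaluated at `x` with parameter `a`:
`D_0(x,a) = 2` and, for `n ≥ 1`,
`D_n(x,a) = Σ_{k=0}^{⌊n/2⌋} (n/(n-k)) · C(n-k,k) · (-a)^k · x^(n-2k)`. -/
noncomputable def dickson (n : ℕ) (x a : ℂ) : ℂ :=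
  if n = 0 then 2
  else ∑ k ∈ Finset.range (n / 2 + 1),
    ((n : ℂ) / ((n : ℂ) - (k : ℂ))) * (Nat.choose (n - k) k : ℂ) * (-a) ^ k * x ^ (n - 2 * k)

lemma nat_id (n k : ℕ) (hn : 1 ≤ n) (hk : k ≤ n / 2) :
    (n + 2) * Nat.choose (n + 1 - k) (k + 1) * (n - k)
      = ((n + 1) * Nat.choose (n - k) (k + 1) + n * Nat.choose (n - k) k) * (n + 1 - k) := by
  obtain ⟨p, rfl⟩ : ∃ p, n = k + p := ⟨n - k, by omega⟩
  have hkp : k ≤ p := by omega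
  have h1 : k + p + 1 - k = p + 1 := by omega
  have h2 : k + p - k = p := by omega
  rw [h1, h2, Nat.choose_succ_succ]
  have hc := Nat.choose_succ_right_eq p k
  zify [hkp] at hc ⊢
  linear_combination -hc

lemma coeff_id (n k : ℕ) (hn : 1 ≤ n) (hk : k ≤ n / 2) :
    (((n:ℂ) + 2) / (((n:ℂ) + 2) - ((k:ℂ) + 1))) * (Nat.choose (n + 1 - k) (k + 1) : ℂ)
      = (((n:ℂ) + 1) / (((n:ℂ) + 1) - ((k:ℂ) + 1))) * (Nat.choose (n - k) (k + 1) : ℂ)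
        + ((n:ℂ) / ((n:ℂ) - (k:ℂ))) * (Nat.choose (n - k) k : ℂ) := by
  have hkn : k + 1 ≤ n := by omega
  have e1 : ((n:ℂ) + 2) - ((k:ℂ) + 1) = ((n + 1 - k : ℕ) : ℂ) := by
    push_cast [Nat.cast_sub (show k ≤ n + 1 by omega)]; ring
  have e2 : ((n:ℂ) + 1) - ((k:ℂ) + 1) = ((n - k : ℕ) : ℂ) := by
    push_cast [Nat.cast_sub (show k ≤ n by omega)]; ring
  have e3 : ((n:ℂ)) - ((k:ℂ)) = ((n - k : ℕ) : ℂ) := by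
    push_cast [Nat.cast_sub (show k ≤ n by omega)]; ring
  have hd1 : ((n + 1 - k : ℕ) : ℂ) ≠ 0 := Nat.cast_ne_zero.mpr (by omega)
  have hd2 : ((n - k : ℕ) : ℂ) ≠ 0 := Nat.cast_ne_zero.mpr (by omega)
  rw [e1, e2, e3]
  have key := congrArg (Nat.cast (R := ℂ)) (nat_id n k hn hk)
  push_cast at key
  field_simp
  push_cast [Nat.cast_sub (show k ≤ n by omega), Nat.cast_sub (show k ≤ n + 1 by omega)] at *
  linear_combination key

lemma term_id (n k : ℕ) (hn : 1 ≤ n) (hk : k ≤ n / 2) (x a : ℂ) :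
    (((n+2:ℕ):ℂ) / (((n+2:ℕ):ℂ) - ((k+1:ℕ):ℂ))) * (Nat.choose (n+2 - (k+1)) (k+1) : ℂ)
        * (-a)^(k+1) * x^(n+2 - 2*(k+1))
    = x * ((((n+1:ℕ):ℂ) / (((n+1:ℕ):ℂ) - ((k+1:ℕ):ℂ))) * (Nat.choose (n+1 - (k+1)) (k+1) : ℂ)
        * (-a)^(k+1) * x^(n+1 - 2*(k+1)))
      - a * (((n:ℕ):ℂ) / (((n:ℕ):ℂ) - ((k:ℕ):ℂ)) * (Nat.choose (n - k) k : ℂ)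
        * (-a)^k * x^(n - 2*k)) := by
  have hcoeff := coeff_id n k hn hk
  have he1 : n + 2 - (k+1) = n + 1 - k := by omega
  have he2 : n + 1 - (k+1) = n - k := by omega
  have he3 : n + 2 - 2*(k+1) = n - 2*k := by omega
  rw [he1, he2, he3]
  push_cast
  rcases lt_or_ge (2*k) n with h | h
  · have he4 : n + 1 - 2*(k+1) = n - 2*k - 1 := by omega
    have he5 : x * x ^ (n - 2*k - 1) = x ^ (n - 2*k) := by
      rw [← pow_succ']
      congr 1
      omega
    rw [he4]
    calc ((n:ℂ) + 2) / ((n:ℂ) + 2 - ((k:ℂ)+1)) * ((n+1-k).choose (k+1) : ℂ) * (-a)^(k+1) * x^(n-2*k)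
        = (((n:ℂ)+1) / (((n:ℂ)+1) - ((k:ℂ)+1)) * ((n-k).choose (k+1) : ℂ)
            + (n:ℂ) / ((n:ℂ) - (k:ℂ)) * ((n-k).choose k : ℂ)) * (-a)^(k+1) * x^(n-2*k) := by
          rw [hcoeff]
      _ = _ := by rw [← he5]; ring
  · have hC : (n - k).choose (k+1) = 0 := Nat.choose_eq_zero_of_lt (by omega)
    rw [hcoeff, hC]
    push_cast
    ring

lemma dickson_rec (n : ℕ) (x a : ℂ) :
    dickson (n + 2) x a = x * dickson (n + 1) x a - a * dickson n x a := by
  rcases Nat.eq_zero_or_pos n with rfl | hn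
  · simp [dickson, Finset.sum_range_succ]
    norm_num
    ring
  · rw [dickson, dickson, dickson, if_neg (by omega), if_neg (by omega), if_neg (by omega)]
    have h2 : (n + 2) / 2 + 1 = n / 2 + 1 + 1 := by omega
    rw [h2]
    have hsub : Finset.range ((n+1)/2 + 1) ⊆ Finset.range (n/2 + 1 + 1) :=
      Finset.range_subset_range.mpr (by omega)
    rw [Finset.sum_subset hsub (by
      intro k hk hk2
      simp only [Finset.mem_range] at hk hk2
      have hlt : n + 1 - k < k := by omega
      rw [Nat.choose_eq_zero_of_lt hlt]
      simp)]
    rw [Finset.sum_range_succ' (fun k => ((n+2:ℕ):ℂ) / (((n+2:ℕ):ℂ) - (k:ℂ)) * ((n+2-k).choose k : ℂ) * (-a)^k * x^(n+2-2*k)) (n/2+1),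
        Finset.sum_range_succ' (fun k => ((n+1:ℕ):ℂ) / (((n+1:ℕ):ℂ) - (k:ℂ)) * ((n+1-k).choose k : ℂ) * (-a)^k * x^(n+1-2*k)) (n/2+1)]
    have hterm : ∀ k ∈ Finset.range (n/2+1),
        ((n+2:ℕ):ℂ) / (((n+2:ℕ):ℂ) - ((k+1:ℕ):ℂ)) * ((n+2-(k+1)).choose (k+1) : ℂ) * (-a)^(k+1) * x^(n+2-2*(k+1))
        = x * (((n+1:ℕ):ℂ) / (((n+1:ℕ):ℂ) - ((k+1:ℕ):ℂ)) * ((n+1-(k+1)).choose (k+1) : ℂ) * (-a)^(k+1) * x^(n+1-2*(k+1)))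
          - a * ((n:ℂ) / ((n:ℂ) - (k:ℂ)) * ((n-k).choose k : ℂ) * (-a)^k * x^(n-2*k)) := by
      intro k hk
      simp only [Finset.mem_range] at hk
      exact term_id n k hn (by omega) x a
    rw [Finset.sum_congr rfl hterm]
    have hf0 : ((n+2:ℕ):ℂ) / (((n+2:ℕ):ℂ) - ((0:ℕ):ℂ)) * ((n+2-0).choose 0 : ℂ) * (-a)^0 * x^(n+2-2*0)
        = x * (((n+1:ℕ):ℂ) / (((n+1:ℕ):ℂ) - ((0:ℕ):ℂ)) * ((n+1-0).choose 0 : ℂ) * (-a)^0 * x^(n+1-2*0)) := by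
      have hx2 : x ^ (n + 2 - 2*0) = x * x ^ (n + 1 - 2*0) := by
        rw [← pow_succ']
        congr 1
      have hne1 : ((n+2:ℕ):ℂ) ≠ 0 := Nat.cast_ne_zero.mpr (by omega)
      have hne2 : ((n+1:ℕ):ℂ) ≠ 0 := Nat.cast_ne_zero.mpr (by omega)
      simp [hx2]
      rw [div_self (by push_cast; exact_mod_cast hne1), div_self (by push_cast; exact_mod_cast hne2)]
      ring
    rw [hf0, Finset.sum_sub_distrib, ← Finset.mul_sum, ← Finset.mul_sum]
    ring

lemma dickson_zw (n : ℕ) (z w : ℂ) : dickson n (z + w) (z * w) = z ^ n + w ^ n := by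
  induction n using Nat.twoStepInduction with
  | zero => simp [dickson]; norm_num
  | one => simp [dickson]
  | more n ih1 ih2 =>
    rw [dickson_rec, ih1, ih2]
    ring

theorem dickson_comp (m n : ℕ) (x a : ℂ) :
    dickson (m * n) x a = dickson m (dickson n x a) (a ^ n) := by
  obtain ⟨d, hd⟩ := IsAlgClosed.exists_pow_nat_eq (x ^ 2 - 4 * a) (n := 2) (by norm_num)
  set z := (x + d) / 2 with hz
  set w := (x - d) / 2 with hw
  have hx : z + w = x := by rw [hz, hw]; ring
  have ha : z * w = a := by rw [hz, hw]; linear_combination (-1/4 : ℂ) * hd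
  have h1 : dickson (m * n) x a = z ^ (m * n) + w ^ (m * n) := by
    rw [← hx, ← ha, dickson_zw]
  have h2 : dickson n x a = z ^ n + w ^ n := by
    rw [← hx, ← ha, dickson_zw]
  rw [h1, h2, ← ha, mul_pow, dickson_zw m (z ^ n) (w ^ n), ← pow_mul, ← pow_mul, Nat.mul_comm n m]
end

section
/- (Carlitz's formula) Let x, y, z be complex numbers with xyz = 1 and let n ≥ 1 be an integer. Then xⁿ + yⁿ + zⁿ = Σ (-1)^j · (n/(i+j+k)) · ((i+j+k)!/(i!·j!·k!)) · (x+y+z)^i · (xy+yz+zx)^j, where the sum runs over all triples of nonnegative integers (i, j, k) with i + 2j + 3k = n. -/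
open Finset

def carlitzT (n : ℕ) : Finset (ℕ × ℕ × ℕ) :=
  (range (n+1) ×ˢ range (n+1) ×ˢ range (n+1)).filter fun p => p.1 + 2 * p.2.1 + 3 * p.2.2 = n

lemma carlitzT_mem {n : ℕ} {p : ℕ × ℕ × ℕ} :
    p ∈ carlitzT n ↔ p.1 + 2 * p.2.1 + 3 * p.2.2 = n := by
  simp only [carlitzT, mem_filter, mem_product, mem_range]
  omega

noncomputable def carlitzg (X Y : ℂ) (n i j k : ℕ) : ℂ :=
  (-1:ℂ)^j * ((n:ℂ) * ((i+j+k-1).factorial : ℂ)) /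
    ((i.factorial : ℂ) * (j.factorial : ℂ) * (k.factorial : ℂ)) * X^i * Y^j

noncomputable def carlitzG (X Y : ℂ) (n : ℕ) : ℂ :=
  ∑ p ∈ carlitzT n, carlitzg X Y n p.1 p.2.1 p.2.2

lemma carlitz_sum_t1 (X Y : ℂ) (N : ℕ) :
    ∑ p ∈ carlitzT (N+1), (p.1 : ℂ) *
      ((-1:ℂ)^p.2.1 * ((N:ℂ) * ((p.1+p.2.1+p.2.2-2).factorial : ℂ)) /
        ((p.1.factorial : ℂ) * (p.2.1.factorial : ℂ) * (p.2.2.factorial : ℂ)) *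
        X^p.1 * Y^p.2.1)
    = X * carlitzG X Y N := by
  rw [carlitzG, Finset.mul_sum]
  rw [← Finset.sum_filter_of_ne (p := fun p : ℕ×ℕ×ℕ => 0 < p.1)
    (fun x _ hf => by by_contra h; simp at h; simp [h] at hf)]
  refine Finset.sum_nbij' (fun p => (p.1 - 1, p.2.1, p.2.2)) (fun q => (q.1 + 1, q.2.1, q.2.2))
    ?_ ?_ ?_ ?_ ?_
  · intro p hp
    simp only [mem_filter, carlitzT_mem] at hp ⊢
    omega
  · intro q hq
    simp only [mem_filter, carlitzT_mem] at hq ⊢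
    omega
  · intro p hp
    obtain ⟨a, b, c⟩ := p
    simp only [mem_filter, carlitzT_mem] at hp
    simp only [Prod.mk.injEq]
    refine ⟨by omega, by simp⟩
  · intro q hq; rfl
  · intro p hp
    obtain ⟨a, b, c⟩ := p
    simp only [mem_filter, carlitzT_mem] at hp
    obtain ⟨a', rfl⟩ : ∃ a', a = a' + 1 := ⟨a - 1, by omega⟩
    simp only [carlitzg, Nat.add_sub_cancel]
    rw [show a' + 1 + b + c - 2 = a' + b + c - 1 from by omega, Nat.factorial_succ]
    have h1 : ((a' : ℂ) + 1) ≠ 0 := by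
      have := Nat.cast_add_one_ne_zero (R := ℂ) a'
      simpa using this
    have h2 : (a'.factorial : ℂ) ≠ 0 := Nat.cast_ne_zero.mpr a'.factorial_ne_zero
    have h3 : (b.factorial : ℂ) ≠ 0 := Nat.cast_ne_zero.mpr b.factorial_ne_zero
    have h4 : (c.factorial : ℂ) ≠ 0 := Nat.cast_ne_zero.mpr c.factorial_ne_zero
    push_cast
    field_simp
    ring

lemma carlitz_sum_t2 (X Y : ℂ) (N : ℕ) :
    ∑ p ∈ carlitzT (N+2), (p.2.1 : ℂ) *
      ((-1:ℂ)^p.2.1 * ((N:ℂ) * ((p.1+p.2.1+p.2.2-2).factorial : ℂ)) /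
        ((p.1.factorial : ℂ) * (p.2.1.factorial : ℂ) * (p.2.2.factorial : ℂ)) *
        X^p.1 * Y^p.2.1)
    = -Y * carlitzG X Y N := by
  rw [carlitzG, Finset.mul_sum]
  rw [← Finset.sum_filter_of_ne (p := fun p : ℕ×ℕ×ℕ => 0 < p.2.1)
    (fun x _ hf => by by_contra h; simp at h; simp [h] at hf)]
  refine Finset.sum_nbij' (fun p => (p.1, p.2.1 - 1, p.2.2)) (fun q => (q.1, q.2.1 + 1, q.2.2))
    ?_ ?_ ?_ ?_ ?_
  · intro p hp
    simp only [mem_filter, carlitzT_mem] at hp ⊢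
    omega
  · intro q hq
    simp only [mem_filter, carlitzT_mem] at hq ⊢
    omega
  · intro p hp
    obtain ⟨a, b, c⟩ := p
    simp only [mem_filter, carlitzT_mem] at hp
    simp only [Prod.mk.injEq]
    exact ⟨trivial, by omega, trivial⟩
  · intro q hq; rfl
  · intro p hp
    obtain ⟨a, b, c⟩ := p
    simp only [mem_filter, carlitzT_mem] at hp
    obtain ⟨b', rfl⟩ : ∃ b', b = b' + 1 := ⟨b - 1, by omega⟩
    simp only [carlitzg, Nat.add_sub_cancel]
    rw [show a + (b' + 1) + c - 2 = a + b' + c - 1 from by omega, Nat.factorial_succ]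
    have h1 : ((b' : ℂ) + 1) ≠ 0 := by
      have := Nat.cast_add_one_ne_zero (R := ℂ) b'
      simpa using this
    have h2 : (a.factorial : ℂ) ≠ 0 := Nat.cast_ne_zero.mpr a.factorial_ne_zero
    have h3 : (b'.factorial : ℂ) ≠ 0 := Nat.cast_ne_zero.mpr b'.factorial_ne_zero
    have h4 : (c.factorial : ℂ) ≠ 0 := Nat.cast_ne_zero.mpr c.factorial_ne_zero
    push_cast
    field_simp
    ring

lemma carlitz_sum_t3 (X Y : ℂ) (N : ℕ) :
    ∑ p ∈ carlitzT (N+3), (p.2.2 : ℂ) *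
      ((-1:ℂ)^p.2.1 * ((N:ℂ) * ((p.1+p.2.1+p.2.2-2).factorial : ℂ)) /
        ((p.1.factorial : ℂ) * (p.2.1.factorial : ℂ) * (p.2.2.factorial : ℂ)) *
        X^p.1 * Y^p.2.1)
    = carlitzG X Y N := by
  rw [carlitzG]
  rw [← Finset.sum_filter_of_ne (p := fun p : ℕ×ℕ×ℕ => 0 < p.2.2)
    (fun x _ hf => by by_contra h; simp at h; simp [h] at hf)]
  refine Finset.sum_nbij' (fun p => (p.1, p.2.1, p.2.2 - 1)) (fun q => (q.1, q.2.1, q.2.2 + 1))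
    ?_ ?_ ?_ ?_ ?_
  · intro p hp
    simp only [mem_filter, carlitzT_mem] at hp ⊢
    omega
  · intro q hq
    simp only [mem_filter, carlitzT_mem] at hq ⊢
    omega
  · intro p hp
    obtain ⟨a, b, c⟩ := p
    simp only [mem_filter, carlitzT_mem] at hp
    simp only [Prod.mk.injEq]
    exact ⟨trivial, trivial, by omega⟩
  · intro q hq; rfl
  · intro p hp
    obtain ⟨a, b, c⟩ := p
    simp only [mem_filter, carlitzT_mem] at hp
    obtain ⟨c', rfl⟩ : ∃ c', c = c' + 1 := ⟨c - 1, by omega⟩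
    simp only [carlitzg, Nat.add_sub_cancel]
    rw [show a + b + (c' + 1) - 2 = a + b + c' - 1 from by omega, Nat.factorial_succ]
    have h1 : ((c' : ℂ) + 1) ≠ 0 := by
      have := Nat.cast_add_one_ne_zero (R := ℂ) c'
      simpa using this
    have h2 : (a.factorial : ℂ) ≠ 0 := Nat.cast_ne_zero.mpr a.factorial_ne_zero
    have h3 : (b.factorial : ℂ) ≠ 0 := Nat.cast_ne_zero.mpr b.factorial_ne_zero
    have h4 : (c'.factorial : ℂ) ≠ 0 := Nat.cast_ne_zero.mpr c'.factorial_ne_zero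
    push_cast
    field_simp

lemma carlitz_gsplit (X Y : ℂ) (m i j k : ℕ) (h : i + 2 * j + 3 * k = m + 4) :
    carlitzg X Y (m+4) i j k =
      (i : ℂ) * ((-1:ℂ)^j * (((m+3 : ℕ) : ℂ) * ((i+j+k-2).factorial : ℂ)) /
        ((i.factorial : ℂ) * (j.factorial : ℂ) * (k.factorial : ℂ)) * X^i * Y^j)
      + (j : ℂ) * ((-1:ℂ)^j * (((m+2 : ℕ) : ℂ) * ((i+j+k-2).factorial : ℂ)) /
        ((i.factorial : ℂ) * (j.factorial : ℂ) * (k.factorial : ℂ)) * X^i * Y^j)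
      + (k : ℂ) * ((-1:ℂ)^j * (((m+1 : ℕ) : ℂ) * ((i+j+k-2).factorial : ℂ)) /
        ((i.factorial : ℂ) * (j.factorial : ℂ) * (k.factorial : ℂ)) * X^i * Y^j) := by
  obtain ⟨s, hs⟩ : ∃ s, i + j + k = s + 2 := ⟨i + j + k - 2, by omega⟩
  have h' : (i : ℂ) + 2 * j + 3 * k = (m : ℂ) + 4 := by exact_mod_cast congrArg (Nat.cast (R := ℂ)) h
  have hs' : (i : ℂ) + j + k = (s : ℂ) + 2 := by exact_mod_cast congrArg (Nat.cast (R := ℂ)) hs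
  rw [carlitzg, hs]
  rw [show s + 2 - 1 = s + 1 from rfl, show s + 2 - 2 = s from rfl, Nat.factorial_succ]
  have hnum : ((m+4 : ℕ) : ℂ) * (((s+1 : ℕ) : ℂ) * (s.factorial : ℂ))
      = (i : ℂ) * (((m+3 : ℕ) : ℂ) * (s.factorial : ℂ))
      + (j : ℂ) * (((m+2 : ℕ) : ℂ) * (s.factorial : ℂ))
      + (k : ℂ) * (((m+1 : ℕ) : ℂ) * (s.factorial : ℂ)) := by
    push_cast
    linear_combination (s.factorial : ℂ) * h' - (s.factorial : ℂ) * ((m : ℂ) + 4) * hs'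
  push_cast at hnum ⊢
  linear_combination ((-1:ℂ)^j * X^i * Y^j / ((i.factorial : ℂ) * (j.factorial : ℂ) * (k.factorial : ℂ))) * hnum

lemma carlitzG_rec (X Y : ℂ) (m : ℕ) :
    carlitzG X Y (m+4) =
      X * carlitzG X Y (m+3) - Y * carlitzG X Y (m+2) + carlitzG X Y (m+1) := by
  have e1 := carlitz_sum_t1 X Y (m+3)
  have e2 := carlitz_sum_t2 X Y (m+2)
  have e3 := carlitz_sum_t3 X Y (m+1)
  have : X * carlitzG X Y (m+3) - Y * carlitzG X Y (m+2) + carlitzG X Y (m+1)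
      = X * carlitzG X Y (m+3) + (-Y * carlitzG X Y (m+2)) + carlitzG X Y (m+1) := by ring
  rw [this, ← e1, ← e2, ← e3]
  rw [carlitzG, ← Finset.sum_add_distrib, ← Finset.sum_add_distrib]
  refine Finset.sum_congr rfl fun p hp => ?_
  exact carlitz_gsplit X Y m p.1 p.2.1 p.2.2 (carlitzT_mem.mp hp)

lemma carlitzG_one (X Y : ℂ) : carlitzG X Y 1 = X := by
  rw [carlitzG, show carlitzT 1 = {(1,0,0)} from by decide]
  simp [carlitzg, Nat.factorial]

lemma carlitzG_two (X Y : ℂ) : carlitzG X Y 2 = X^2 - 2*Y := by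
  rw [carlitzG, show carlitzT 2 = {(2,0,0),(0,1,0)} from by decide]
  simp [carlitzg, Nat.factorial]
  ring

lemma carlitzG_three (X Y : ℂ) : carlitzG X Y 3 = X^3 - 3*X*Y + 3 := by
  rw [carlitzG, show carlitzT 3 = {(3,0,0),(1,1,0),(0,0,1)} from by decide]
  simp [carlitzg, Nat.factorial]
  ring

lemma carlitz_main (x y z : ℂ) (hxyz : x * y * z = 1) :
    ∀ n : ℕ, x ^ (n+1) + y ^ (n+1) + z ^ (n+1)
      = carlitzG (x + y + z) (x * y + y * z + z * x) (n+1) := by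
  intro n
  induction n using Nat.strong_induction_on with
  | _ n ih =>
    match n with
    | 0 => rw [carlitzG_one]; ring
    | 1 => rw [carlitzG_two]; ring
    | 2 => rw [carlitzG_three]; linear_combination (3:ℂ) * hxyz
    | (m+3) =>
      have h1 := ih m (by omega)
      have h2 := ih (m+1) (by omega)
      have h3 := ih (m+2) (by omega)
      rw [show m + 3 + 1 = m + 4 from rfl, carlitzG_rec,
        show m + 3 = m + 2 + 1 from rfl, ← h3, show m + 2 = m + 1 + 1 from rfl, ← h2, ← h1]
      linear_combination (x^(m+1) + y^(m+1) + z^(m+1)) * hxyz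

/-- Carlitz's formula: if `xyz = 1` then
`xⁿ + yⁿ + zⁿ = Σ_{i+2j+3k=n} (-1)^j · (n/(i+j+k)) · ((i+j+k)!/(i!·j!·k!)) ·
(x+y+z)^i · (xy+yz+zx)^j`. -/
theorem carlitz_formula (x y z : ℂ) (hxyz : x * y * z = 1) (n : ℕ) (hn : 1 ≤ n) :
    x ^ n + y ^ n + z ^ n =
      ∑ p ∈ (Finset.range (n + 1) ×ˢ Finset.range (n + 1) ×ˢ Finset.range (n + 1)).filter
          (fun p => p.1 + 2 * p.2.1 + 3 * p.2.2 = n),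
        (-1 : ℂ) ^ p.2.1 * ((n : ℂ) / ((p.1 + p.2.1 + p.2.2 : ℕ) : ℂ)) *
          (((p.1 + p.2.1 + p.2.2).factorial : ℂ) /
            ((p.1.factorial : ℂ) * (p.2.1.factorial : ℂ) * (p.2.2.factorial : ℂ))) *
          (x + y + z) ^ p.1 * (x * y + y * z + z * x) ^ p.2.1 := by
  obtain ⟨n', rfl⟩ : ∃ n', n = n' + 1 := ⟨n - 1, by omega⟩
  rw [carlitz_main x y z hxyz n']
  rw [carlitzG]
  refine (Finset.sum_congr rfl fun p hp => ?_).symm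
  obtain ⟨a, b, c⟩ := p
  have hm := carlitzT_mem.mp hp
  simp only at hm ⊢
  obtain ⟨s, hs⟩ : ∃ s, a + b + c = s + 1 := ⟨a + b + c - 1, by omega⟩
  rw [carlitzg, hs, show s + 1 - 1 = s from rfl, Nat.factorial_succ]
  have h1 : ((s : ℂ) + 1) ≠ 0 := by
    have := Nat.cast_add_one_ne_zero (R := ℂ) s
    simpa using this
  have h2 : (a.factorial : ℂ) ≠ 0 := Nat.cast_ne_zero.mpr a.factorial_ne_zero
  have h3 : (b.factorial : ℂ) ≠ 0 := Nat.cast_ne_zero.mpr b.factorial_ne_zero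
  have h4 : (c.factorial : ℂ) ≠ 0 := Nat.cast_ne_zero.mpr c.factorial_ne_zero
  push_cast
  field_simp
end

section
/- Let x, y, z be complex numbers with xy + yz + zx = 0 and let n ≥ 1 be an integer. Then xⁿ + yⁿ + zⁿ = Σ_{k=0}^{⌊n/3⌋} (n/(n-2k)) · C(n-2k, k) · (x+y+z)^{n-3k} · (xyz)^k. -/
open Finset


noncomputable def Tc (x y z : ℂ) (n k : ℕ) : ℂ :=
  ((n : ℂ) / ((n : ℂ) - 2 * (k : ℂ))) * (Nat.choose (n - 2 * k) k : ℂ) *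
    (x + y + z) ^ (n - 3 * k) * (x * y * z) ^ k

lemma Tc_eq_zero (x y z : ℂ) {n k : ℕ} (h3 : n < 3 * k) :
    Tc x y z n k = 0 := by
  have : n - 2 * k < k := by omega
  simp [Tc, Nat.choose_eq_zero_of_lt this]

lemma coefId (m j : ℕ) (hm : 1 ≤ m) (hjm : j + 1 ≤ m) :
    ((m : ℂ) + 2 * j + 3) / ((m : ℂ) + 1) * ((m + 1).choose (j + 1) : ℂ)
      = ((m : ℂ) + 2 * j + 2) / (m : ℂ) * (m.choose (j + 1) : ℂ)
        + ((m : ℂ) + 2 * j) / (m : ℂ) * (m.choose j : ℂ) := by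
  have csr : m.choose (j + 1) * (j + 1) = m.choose j * (m - j) :=
    Nat.choose_succ_right_eq m j
  have csrC : (m.choose (j + 1) : ℂ) * ((j : ℂ) + 1) = (m.choose j : ℂ) * ((m : ℂ) - j) := by
    have := congrArg (Nat.cast : ℕ → ℂ) csr
    push_cast [Nat.cast_sub (by omega : j ≤ m)] at this
    exact this
  have pascalC : ((m + 1).choose (j + 1) : ℂ) = (m.choose j : ℂ) + (m.choose (j + 1) : ℂ) := by
    exact_mod_cast congrArg (Nat.cast : ℕ → ℂ) (Nat.choose_succ_succ m j)
  have hmc : (m : ℂ) ≠ 0 := Nat.cast_ne_zero.mpr (by omega)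
  have hm1c : (m : ℂ) + 1 ≠ 0 := by
    have : ((m + 1 : ℕ) : ℂ) ≠ 0 := Nat.cast_ne_zero.mpr (by omega)
    push_cast at this; exact this
  field_simp
  linear_combination ((m : ℂ) * ((m : ℂ) + 2 * j + 3)) * pascalC - 2 * csrC

lemma key (x y z : ℂ) (n j : ℕ) (hn : 1 ≤ n) :
    Tc x y z (n + 3) (j + 1)
      = (x + y + z) * Tc x y z (n + 2) (j + 1) + (x * y * z) * Tc x y z n j := by
  rcases lt_or_ge n (3 * j) with hj | hj
  · rw [Tc_eq_zero x y z (by omega), Tc_eq_zero x y z (by omega),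
        Tc_eq_zero x y z (by omega)]
    ring
  rcases eq_or_lt_of_le hj with hj' | hj'
  · -- n = 3j exactly
    have hj1 : 1 ≤ j := by omega
    have e1 : n + 3 - 2 * (j + 1) = j + 1 := by omega
    have e2 : n + 3 - 3 * (j + 1) = 0 := by omega
    have e3 : n + 2 - 2 * (j + 1) = j := by omega
    have e4 : n - 2 * j = j := by omega
    have e5 : n - 3 * j = 0 := by omega
    have e6 : n + 2 - 3 * (j + 1) = 0 := by omega
    simp only [Tc, e1, e2, e3, e4, e5, e6, Nat.choose_self, Nat.choose_succ_self,
      Nat.cast_zero, Nat.cast_one, pow_zero]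
    rw [← hj']
    push_cast
    have hjc : (j : ℂ) ≠ 0 := Nat.cast_ne_zero.mpr (by omega)
    have h1j : (j : ℂ) + 1 ≠ 0 := by
      have : ((j + 1 : ℕ) : ℂ) ≠ 0 := Nat.cast_ne_zero.mpr (by omega)
      push_cast at this; exact this
    have h1j' : (1 : ℂ) + (j : ℂ) ≠ 0 := by rw [add_comm]; exact h1j
    have A : ((1 : ℂ) + (j : ℂ)) * ((1 : ℂ) + (j : ℂ))⁻¹ = 1 := mul_inv_cancel₀ h1j'
    have B : (j : ℂ) * ((j : ℂ))⁻¹ = 1 := mul_inv_cancel₀ hjc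
    linear_combination (3 * (x * y * z) ^ (j + 1)) * A - (3 * (x * y * z) ^ (j + 1)) * B
  · -- 3j < n
    have hm1 : 1 ≤ n - 2 * j := by omega
    set m := n - 2 * j with hm
    have hnm : n = m + 2 * j := by omega
    have e1 : n + 3 - 2 * (j + 1) = m + 1 := by omega
    have e2 : n + 3 - 3 * (j + 1) = m - j := by omega
    have e3 : n + 2 - 2 * (j + 1) = m := by omega
    have e4 : n + 2 - 3 * (j + 1) = m - j - 1 := by omega
    have e5 : n - 3 * j = m - j := by omega
    have hjm : j + 1 ≤ m := by omega
    have hp : (m - j : ℕ) = (m - j - 1) + 1 := by omega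
    have e7 : n - 2 * j = m := hm.symm
    simp only [Tc, e1, e2, e3, e4, e5, e7]
    rw [hnm, hp, pow_succ]
    push_cast
    linear_combination ((x + y + z) ^ (m - j - 1) * (x + y + z) * (x * y * z) ^ (j + 1)) *
      coefId m j (by omega) hjm

lemma newton (x y z : ℂ) (h : x * y + y * z + z * x = 0) (n : ℕ) :
    x ^ (n+3) + y ^ (n+3) + z ^ (n+3)
      = (x + y + z) * (x ^ (n+2) + y ^ (n+2) + z ^ (n+2))
        + (x * y * z) * (x ^ n + y ^ n + z ^ n) := by
  linear_combination (-(x ^ (n+1) + y ^ (n+1) + z ^ (n+1))) * h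

lemma Tc_zero (x y z : ℂ) {n : ℕ} (hn : n ≠ 0) : Tc x y z n 0 = (x + y + z) ^ n := by
  have h : (n : ℂ) ≠ 0 := Nat.cast_ne_zero.mpr hn
  simp [Tc, div_self h]

lemma sum_ext (x y z : ℂ) (n N : ℕ) (hN : n / 3 + 1 ≤ N) :
    ∑ k ∈ range (n / 3 + 1), Tc x y z n k = ∑ k ∈ range N, Tc x y z n k := by
  apply Finset.sum_subset (Finset.range_subset_range.mpr hN)
  intro k hk hk'
  simp only [mem_range] at hk hk'
  exact Tc_eq_zero x y z (by omega)

lemma Frec (x y z : ℂ) (n : ℕ) (hn : 1 ≤ n) :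
    (∑ k ∈ range ((n + 3) / 3 + 1), Tc x y z (n + 3) k)
      = (x + y + z) * (∑ k ∈ range ((n + 2) / 3 + 1), Tc x y z (n + 2) k)
        + (x * y * z) * (∑ k ∈ range (n / 3 + 1), Tc x y z n k) := by
  rw [sum_ext x y z (n + 3) (n + 2) (by omega), sum_ext x y z (n + 2) (n + 2) (by omega),
      sum_ext x y z n (n + 1) (by omega), Finset.mul_sum, Finset.mul_sum]
  rw [Finset.sum_range_succ' (fun k => Tc x y z (n + 3) k) (n + 1),
      Finset.sum_range_succ' (fun k => (x + y + z) * Tc x y z (n + 2) k) (n + 1)]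
  rw [Tc_zero x y z (by omega : n + 3 ≠ 0), Tc_zero x y z (by omega : n + 2 ≠ 0)]
  have hsum : ∑ k ∈ range (n + 1), Tc x y z (n + 3) (k + 1)
      = ∑ k ∈ range (n + 1), ((x + y + z) * Tc x y z (n + 2) (k + 1)
          + (x * y * z) * Tc x y z n k) := by
    exact Finset.sum_congr rfl fun k _ => key x y z n k hn
  rw [hsum, Finset.sum_add_distrib, ← Finset.mul_sum]
  ring

lemma main (x y z : ℂ) (h : x * y + y * z + z * x = 0) :
    ∀ n : ℕ, 1 ≤ n → x ^ n + y ^ n + z ^ n = ∑ k ∈ range (n / 3 + 1), Tc x y z n k := by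
  intro n
  induction n using Nat.strong_induction_on with
  | _ n ih =>
    match n with
    | 0 => intro h0; omega
    | 1 => intro _; norm_num [Tc]
    | 2 =>
      intro _
      norm_num [Tc]
      linear_combination (-2 : ℂ) * h
    | 3 =>
      intro _
      norm_num [Tc, Finset.sum_range_succ]
      linear_combination (-3 * (x + y + z)) * h
    | (m + 4) =>
      intro _
      have h1 : x ^ (m + 1) + y ^ (m + 1) + z ^ (m + 1)
          = ∑ k ∈ range ((m + 1) / 3 + 1), Tc x y z (m + 1) k :=
        ih (m + 1) (by omega) (by omega)
      have h3 : x ^ (m + 3) + y ^ (m + 3) + z ^ (m + 3)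
          = ∑ k ∈ range ((m + 3) / 3 + 1), Tc x y z (m + 3) k :=
        ih (m + 3) (by omega) (by omega)
      have hnewt := newton x y z h (m + 1)
      have hfrec := Frec x y z (m + 1) (by omega)
      have e1 : m + 1 + 3 = m + 4 := by omega
      have e2 : m + 1 + 2 = m + 3 := by omega
      rw [e1, e2] at hnewt hfrec
      rw [hnewt, hfrec, h1, h3]

theorem sum_pow_three_of_sum_prod_eq_zero (x y z : ℂ) (h : x * y + y * z + z * x = 0)
    (n : ℕ) (hn : 1 ≤ n) :
    x ^ n + y ^ n + z ^ n =
      ∑ k ∈ Finset.range (n / 3 + 1),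
        ((n : ℂ) / ((n : ℂ) - 2 * (k : ℂ))) * (Nat.choose (n - 2 * k) k : ℂ) *
          (x + y + z) ^ (n - 3 * k) * (x * y * z) ^ k := by
  exact main x y z h n hn
end

section
/- Fix an integer k ≥ 0 and rational numbers x, a. The formal power series Σ_{n=0}^∞ D_{n,k}(x,a)·zⁿ over ℚ satisfies (1 − x·z + a·z²) · Σ_{n=0}^∞ D_{n,k}(x,a)·zⁿ = (2 − k) + (k − 1)·x·z, i.e. the generating series of the Dickson polynomials of the (k+1)-th kind equals (2 − k + (k−1)xz)/(1 − xz + az²). -/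
/-- The `n`-th Dickson polynomial of the `(k+1)`-th kind over `ℚ`, evaluated at `x` with
parameter `a`: `D_{0,k}(x,a) = 2 − k` and, for `n ≥ 1`,
`D_{n,k}(x,a) = Σ_{i=0}^{⌊n/2⌋} ((n − k·i)/(n − i)) · C(n−i,i) · (−a)^i · x^(n−2i)`. -/
def dicksonKindQ (k n : ℕ) (x a : ℚ) : ℚ :=
  if n = 0 then 2 - (k : ℚ)
  else ∑ i ∈ Finset.range (n / 2 + 1),
    (((n : ℚ) - (k : ℚ) * (i : ℚ)) / ((n : ℚ) - (i : ℚ))) * (Nat.choose (n - i) i : ℚ) *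
      (-a) ^ i * x ^ (n - 2 * i)

/-!
Splitting the coefficient, `(n - k i)/(n - i) · C(n-i, i) = C(n-i, i) - (k-1) · C(n-i-1, i-1)`
for `0 < i < n`, gives `D_{n,k} = E_n + (k-1) a E_{n-2}` for `n ≥ 2`, where `E_n = Σ_i C(n-i, i) (-a)^i x^(n-2i)`
is the Dickson polynomial of the second kind. By Pascal's rule `E_{n+2} = x E_{n+1} - a E_n`,
with `E_0 = 1` and `E_1 = x`, so `(1 - xz + az²) Σ E_n zⁿ = 1`; and `Σ D_{n,k} zⁿ` is
`(1 + (k-1) a z²) Σ E_n zⁿ + (1 - k)`.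
-/

namespace PowerSeries

theorem mul_mk_eq_of_add_two {R : Type*} [CommRing R] (x a : R) (u : ℕ → R)
    (hu : ∀ n, u (n + 2) = x * u (n + 1) - a * u n) :
    (1 - C x * X + C a * X ^ 2) * mk u = C (u 0) + C (u 1 - x * u 0) * X := by
  ext n
  rcases n with _ | _ | n <;> simp [sub_mul, add_mul, mul_assoc, coeff_X_pow_mul', hu]

end PowerSeries

theorem Nat.choose_sub_eq_zero_of_div_two_lt {n i : ℕ} (h : n / 2 < i) : (n - i).choose i = 0 :=
  Nat.choose_eq_zero_of_lt (by omega)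

section SecondKind

open Finset

variable {R : Type*} [CommRing R] (x a : R)

-- The exponent `n - 2 * i` truncates only where the binomial coefficient already vanishes.
def dicksonSecondKindTerm (n i : ℕ) : R :=
  (n - i).choose i * (-a) ^ i * x ^ (n - 2 * i)

def dicksonSecondKind (n : ℕ) : R :=
  ∑ i ∈ range (n + 1), dicksonSecondKindTerm x a n i

theorem dicksonSecondKindTerm_eq_zero {n i : ℕ} (h : n / 2 < i) :
    dicksonSecondKindTerm x a n i = 0 := by
  simp [dicksonSecondKindTerm, Nat.choose_sub_eq_zero_of_div_two_lt h]

theorem dicksonSecondKind_eq_sum_range {n N : ℕ} (hN : n / 2 < N) :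
    dicksonSecondKind x a n = ∑ i ∈ range N, dicksonSecondKindTerm x a n i := by
  have vanish {M : ℕ} :
      ∀ i ∈ range M, i ∉ range (n / 2 + 1) → dicksonSecondKindTerm x a n i = 0 :=
    fun i _ hi => dicksonSecondKindTerm_eq_zero x a (by simpa using hi)
  rw [dicksonSecondKind,
    ← sum_subset (range_subset_range.2 (by omega : n / 2 + 1 ≤ n + 1)) vanish,
    ← sum_subset (range_subset_range.2 (by omega : n / 2 + 1 ≤ N)) vanish]

theorem dicksonSecondKindTerm_add_two (n i : ℕ) :
    dicksonSecondKindTerm x a (n + 2) (i + 1) =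
      x * dicksonSecondKindTerm x a (n + 1) (i + 1) - a * dicksonSecondKindTerm x a n i := by
  rcases lt_or_ge n i with hni | hin
  · simp [dicksonSecondKindTerm_eq_zero x a (n := n + 2) (i := i + 1) (by omega),
      dicksonSecondKindTerm_eq_zero x a (n := n + 1) (i := i + 1) (by omega),
      dicksonSecondKindTerm_eq_zero x a (n := n) (i := i) (by omega)]
  have hpow : x * x ^ (n + 1 - 2 * (i + 1)) * ((n - i).choose (i + 1) : R) =
      x ^ (n - 2 * i) * (n - i).choose (i + 1) := by
    rcases lt_or_ge (n - i) (i + 1) with h | h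
    · simp [Nat.choose_eq_zero_of_lt h]
    · rw [← pow_succ', show n + 1 - 2 * (i + 1) + 1 = n - 2 * i by omega]
  simp only [dicksonSecondKindTerm, show n + 2 - (i + 1) = n - i + 1 by omega,
    show n + 1 - (i + 1) = n - i by omega, show n + 2 - 2 * (i + 1) = n - 2 * i by omega,
    Nat.choose_succ_succ']
  push_cast
  linear_combination -(-a) ^ (i + 1) * hpow

@[simp] theorem dicksonSecondKind_zero : dicksonSecondKind x a 0 = 1 := by
  simp [dicksonSecondKind, dicksonSecondKindTerm]

@[simp] theorem dicksonSecondKind_one : dicksonSecondKind x a 1 = x := by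
  simp [dicksonSecondKind, dicksonSecondKindTerm, sum_range_succ]

theorem dicksonSecondKind_add_two (n : ℕ) :
    dicksonSecondKind x a (n + 2) =
      x * dicksonSecondKind x a (n + 1) - a * dicksonSecondKind x a n := by
  have top : dicksonSecondKindTerm x a (n + 2) 0 = x * dicksonSecondKindTerm x a (n + 1) 0 := by
    simp [dicksonSecondKindTerm, pow_succ']
  rw [dicksonSecondKind_eq_sum_range x a (N := n + 2) (by omega), sum_range_succ' _ (n + 1),
    dicksonSecondKind, sum_range_succ' _ (n + 1), dicksonSecondKind]
  simp only [dicksonSecondKindTerm_add_two, sum_sub_distrib, mul_add, mul_sum, top]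
  ring

end SecondKind

section DicksonKind

open Finset

theorem dicksonKindQ_eq_sum_range (k : ℕ) (x a : ℚ) {n N : ℕ} (hn : n ≠ 0)
    (hN : n / 2 < N) :
    dicksonKindQ k n x a = ∑ i ∈ range N,
      ((n : ℚ) - k * i) / (n - i) * (n - i).choose i * (-a) ^ i * x ^ (n - 2 * i) := by
  have vanish : ∀ i ∈ range N, i ∉ range (n / 2 + 1) →
      ((n : ℚ) - k * i) / (n - i) * (n - i).choose i * (-a) ^ i * x ^ (n - 2 * i) = 0 :=
    fun i _ hi => by simp [Nat.choose_sub_eq_zero_of_div_two_lt (by simpa using hi : n / 2 < i)]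
  rw [dicksonKindQ, if_neg hn, ← sum_subset (range_subset_range.2 (by omega)) vanish]

theorem div_mul_choose_eq_choose_sub_choose (k : ℕ) {n i : ℕ} (hi : i ≤ n) :
    (((n + 2 : ℕ) : ℚ) - k * (i + 1 : ℕ)) / ((n + 2 : ℕ) - (i + 1 : ℕ)) *
        (n + 2 - (i + 1)).choose (i + 1) =
      (n + 2 - (i + 1)).choose (i + 1) - ((k : ℚ) - 1) * (n - i).choose i := by
  obtain ⟨q, rfl⟩ := Nat.exists_eq_add_of_le hi
  have h : ((q + 1 : ℕ) : ℚ) * q.choose i = (q + 1).choose (i + 1) * (i + 1 : ℕ) := by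
    exact_mod_cast Nat.add_one_mul_choose_eq q i
  rw [show i + q + 2 - (i + 1) = q + 1 by omega, Nat.add_sub_cancel_left, div_mul_eq_mul_div,
    div_eq_iff (by push_cast; linarith)]
  push_cast at h ⊢
  linear_combination ((k : ℚ) - 1) * h

theorem dicksonKindQ_add_two (k n : ℕ) (x a : ℚ) :
    dicksonKindQ k (n + 2) x a =
      dicksonSecondKind x a (n + 2) + ((k : ℚ) - 1) * a * dicksonSecondKind x a n := by
  rw [dicksonKindQ_eq_sum_range k x a (N := n + 2) (by omega) (by omega),
    sum_range_succ' _ (n + 1), dicksonSecondKind_eq_sum_range x a (N := n + 2) (by omega),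
    sum_range_succ' _ (n + 1), dicksonSecondKind, mul_sum, add_right_comm, ← sum_add_distrib]
  congr 1
  · refine sum_congr rfl fun i hi => ?_
    simp only [dicksonSecondKindTerm]
    rw [div_mul_choose_eq_choose_sub_choose k (mem_range_succ_iff.mp hi),
      show n + 2 - 2 * (i + 1) = n - 2 * i by omega]
    ring
  · simp [dicksonSecondKindTerm, div_self (by positivity : (n : ℚ) + 2 ≠ 0)]

@[simp] theorem dicksonKindQ_zero (k : ℕ) (x a : ℚ) : dicksonKindQ k 0 x a = 2 - k := by
  simp [dicksonKindQ]

@[simp] theorem dicksonKindQ_one (k : ℕ) (x a : ℚ) : dicksonKindQ k 1 x a = x := by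
  simp [dicksonKindQ]

end DicksonKind

open PowerSeries

theorem mk_dicksonKindQ (k : ℕ) (x a : ℚ) :
    mk (fun n => dicksonKindQ k n x a) =
      (1 + C (((k : ℚ) - 1) * a) * X ^ 2) * mk (dicksonSecondKind x a) + C (1 - (k : ℚ)) := by
  ext n
  rcases n with _ | _ | n <;>
    simp only [add_mul, one_mul, mul_assoc, map_add, coeff_mk, coeff_C_mul, coeff_X_pow_mul',
      coeff_C]
  · simp; ring
  · simp
  · simp [dicksonKindQ_add_two, mul_assoc]

/-- The generating series of the Dickson polynomials of the `(k+1)`-th kind equals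
`(2 − k + (k−1)xz)/(1 − xz + az²)` as a formal power series over `ℚ`. -/
theorem dicksonKind_generating_series (k : ℕ) (x a : ℚ) :
    (1 - PowerSeries.C x * PowerSeries.X + PowerSeries.C a * PowerSeries.X ^ 2) *
        PowerSeries.mk (fun n => dicksonKindQ k n x a)
      = PowerSeries.C (2 - (k : ℚ)) + PowerSeries.C (((k : ℚ) - 1) * x) * PowerSeries.X := by
  have hE : (1 - C x * X + C a * X ^ 2) * mk (dicksonSecondKind x a) = 1 := by
    simpa using mul_mk_eq_of_add_two x a _ (dicksonSecondKind_add_two x a)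
  rw [mk_dicksonKindQ]
  linear_combination (norm := skip) (1 + C (((k : ℚ) - 1) * a) * X ^ 2) * hE
  simp only [map_sub, map_mul, map_one, map_natCast, map_ofNat]
  ring
end
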